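/- Let A_δ be the simple perturbed PCM with Perron eigenvalue λ and Perron eigenvector w (normalized so that w_2 = (1/x_1)[λ − (1 − 1/δ)(λ−n+2)] and w_j = (1/x_{j-1})(λ−1+1/δ) for j ≥ 3). For every j ∈ {3,…,n}: if δ > 1 then w_2/w_j < a_{2j} = x_{j-1}/x_1, and if δ < 1 then w_2/w_j > a_{2j}. -/

import Mathlib

/-! Writing `w₂ = N / x₁` and `wⱼ = D / x_{j-1}`, the ratio `w₂ / wⱼ` equals `a₂ⱼ · (N / D)`
with `D = λ - 1 + 1/δ > 0`, and `N - D = -(1 - 1/δ)(λ - n + 1)`. Since `λ > n`, the factor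
`λ - n + 1` is positive, so `N / D` lies below or above `1` according to the sign of `1 - 1/δ`. -/

/-- A pairwise comparison matrix: positive entries with the reciprocal property. -/
def IsPCM {n : ℕ} (A : Matrix (Fin n) (Fin n) ℝ) : Prop :=
  (∀ i j, 0 < A i j) ∧ (∀ i j, A j i = 1 / A i j)

/-- A PCM is consistent if `a i k * a k j = a i j` for all `i j k`. -/
def IsConsistent {n : ℕ} (A : Matrix (Fin n) (Fin n) ℝ) : Prop :=
  ∀ i j k, A i k * A k j = A i j

/-- `lam` together with a positive eigenvector `w` forms the Perron eigenpair of `A`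
(for a positive matrix, the eigenvalue admitting a positive eigenvector is exactly
the Perron (maximal) eigenvalue). -/
def IsPerronEigenpair {n : ℕ} (A : Matrix (Fin n) (Fin n) ℝ) (lam : ℝ)
    (w : Fin n → ℝ) : Prop :=
  (∀ i, 0 < w i) ∧ A.mulVec w = lam • w

/-- The simple perturbed PCM `A_δ`: the consistent PCM generated by positive weights
`x` (with `x 0 = 1`), whose entry in position (1,2) (0-based: (0,1)) is multiplied
by `δ` and its reciprocal by `1/δ`. -/
noncomputable def simplePerturbed {n : ℕ} (x : Fin n → ℝ) (δ : ℝ) : Matrix (Fin n) (Fin n) ℝ :=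
  fun i j =>
    if i.val = 0 ∧ j.val = 1 then x j * δ
    else if i.val = 1 ∧ j.val = 0 then 1 / (x i * δ)
    else x j / x i

/-- A positive weight vector `w` is efficient for `A` if no positive vector `w'`
approximates every entry at least as well, and some entry strictly better. -/
def IsEfficient {n : ℕ} (A : Matrix (Fin n) (Fin n) ℝ) (w : Fin n → ℝ) : Prop :=
  ¬ ∃ w' : Fin n → ℝ, (∀ i, 0 < w' i) ∧
      (∀ i j, |A i j - w' i / w' j| ≤ |A i j - w i / w j|) ∧
      (∃ k l, |A k l - w' k / w' l| < |A k l - w k / w l|)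

theorem one_div_mul_div_one_div_mul {K : Type*} [Field K] (a b N D : K) :
    1 / a * N / (1 / b * D) = b / a * (N / D) := by
  simp only [div_eq_mul_inv, one_mul, mul_inv, inv_inv]
  ring

theorem perturbed_numerator_sub_denominator (lam m δ : ℝ) :
    (lam - (1 - 1 / δ) * (lam - m + 2)) - (lam - 1 + 1 / δ) = -((1 - 1 / δ) * (lam - m + 1)) := by
  ring

theorem one_sub_one_div_pos {δ : ℝ} (hδ : 1 < δ) : 0 < 1 - 1 / δ :=
  sub_pos.2 ((div_lt_one (by linarith)).2 hδ)

theorem one_sub_one_div_neg {δ : ℝ} (hδ : 0 < δ) (hδ1 : δ < 1) : 1 - 1 / δ < 0 :=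
  sub_neg.2 (one_lt_one_div hδ hδ1)

/-- Lemma 3.3: with w₂ = (1/x₁)[λ − (1−1/δ)(λ−n+2)] and
w_j = (1/x_{j-1})(λ−1+1/δ) for j ≥ 3: if δ > 1 then w₂/w_j < a₂ⱼ = x_{j-1}/x₁,
and if δ < 1 then w₂/w_j > a₂ⱼ. -/
theorem ratio_w2_wj_vs_a2j {n : ℕ} (hn : 3 ≤ n)
    (x : Fin n → ℝ) (hx : ∀ i, 0 < x i)
    (δ : ℝ) (hδ : 0 < δ)
    (lam : ℝ)
    (hgt : (n : ℝ) < lam) :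
    ∀ j : Fin n, 2 ≤ j.val →
      (1 < δ →
        ((1 / x ⟨1, by omega⟩) * (lam - (1 - 1 / δ) * (lam - n + 2))) /
            ((1 / x j) * (lam - 1 + 1 / δ)) < x j / x ⟨1, by omega⟩) ∧
      (δ < 1 →
        ((1 / x ⟨1, by omega⟩) * (lam - (1 - 1 / δ) * (lam - n + 2))) /
            ((1 / x j) * (lam - 1 + 1 / δ)) > x j / x ⟨1, by omega⟩) := by
  intro j _
  have hn3 : (3 : ℝ) ≤ n := by exact_mod_cast hn
  have hD : 0 < lam - 1 + 1 / δ := by linarith [one_div_pos.2 hδ]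
  have hgap : 0 < lam - n + 1 := by linarith
  have hdiff := perturbed_numerator_sub_denominator lam n δ
  have ha : 0 < x j / x ⟨1, by omega⟩ := div_pos (hx j) (hx _)
  rw [one_div_mul_div_one_div_mul]
  refine ⟨fun hδ1 => mul_lt_of_lt_one_right ha ((div_lt_one hD).2 ?_),
    fun hδ1 => lt_mul_of_one_lt_right ha ((one_lt_div hD).2 ?_)⟩
  · linarith [mul_pos (one_sub_one_div_pos hδ1) hgap]
  · linarith [mul_neg_of_neg_of_pos (one_sub_one_div_neg hδ hδ1) hgap]
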